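/- arXiv:1903.02394 — 2 statements merged into one kernel-verified Lean document; each statement's English description precedes it below -/
import Mathlib

section
/- For every ε > 0 there exists λ_ε > 1 such that for all x₁, x₂ ∈ ℝⁿ with w(x₂) > λ_ε·w(x₁), one has w(x₁ + x₂) < (1 + ε)·w(x₂). -/
open MeasureTheory Set ENNReal NNReal

noncomputable section

/-- Points of `ℝⁿ` with the Euclidean norm. -/
abbrev Pt (n : ℕ) := EuclideanSpace ℝ (Fin n)

/-- The action of an `n × n` real matrix on Euclidean space. -/
def mapp {n : ℕ} (A : Matrix (Fin n) (Fin n) ℝ) (x : Pt n) : Pt n :=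
  Matrix.toEuclideanLin A x

/-- A real matrix is expanding if all of its (complex) eigenvalues have modulus `> 1`. -/
def IsExpandingMatrix {n : ℕ} (A : Matrix (Fin n) (Fin n) ℝ) : Prop :=
  ∀ μ ∈ spectrum ℂ (A.map (fun a => (a : ℂ))), 1 < ‖μ‖

/-- The diameter of a set with respect to the pseudo norm `w`. -/
def pdiam {n : ℕ} (w : Pt n → ℝ) (E : Set (Pt n)) : ℝ≥0∞ :=
  ⨆ (x ∈ E) (y ∈ E), ENNReal.ofReal (w (x - y))

/-- The `δ`-approximation of the `s`-dimensional pseudo Hausdorff measure. -/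
def preHw {n : ℕ} (w : Pt n → ℝ) (s δ : ℝ) (E : Set (Pt n)) : ℝ≥0∞ :=
  ⨅ (U : ℕ → Set (Pt n)) (_ : E ⊆ ⋃ i, U i)
    (_ : ∀ i, pdiam w (U i) ≤ ENNReal.ofReal δ), ∑' i, pdiam w (U i) ^ s

/-- The `s`-dimensional pseudo Hausdorff measure w.r.t. the pseudo norm `w`. -/
def Hw {n : ℕ} (w : Pt n → ℝ) (s : ℝ) (E : Set (Pt n)) : ℝ≥0∞ :=
  ⨆ (δ : ℝ) (_ : 0 < δ), preHw w s δ E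

/-- Carathéodory measurability with respect to the outer measure `Hw w s`. -/
def HwMeasurable {n : ℕ} (w : Pt n → ℝ) (s : ℝ) (E : Set (Pt n)) : Prop :=
  ∀ T : Set (Pt n), Hw w s T = Hw w s (T ∩ E) + Hw w s (T \ E)

/-- A pseudo norm associated with the expanding matrix `A`. -/
structure IsPseudoNorm {n : ℕ} (A : Matrix (Fin n) (Fin n) ℝ) (w : Pt n → ℝ) : Prop where
  continuous : Continuous w
  nonneg : ∀ x, 0 ≤ w x
  neg : ∀ x, w (-x) = w x
  eq_zero_iff : ∀ x, w x = 0 ↔ x = 0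
  scaling : ∀ x, w (mapp A x) = |A.det| ^ ((1 : ℝ) / n) * w x
  quasi_triangle : ∃ β > (0 : ℝ), ∀ x y, w (x + y) ≤ β * max (w x) (w y)
  comparable : ∃ C > (0 : ℝ), ∃ α₁ > (0 : ℝ), ∃ α₂ > (0 : ℝ),
    (∀ x : Pt n, 1 < ‖x‖ → C⁻¹ * ‖x‖ ^ α₁ ≤ w x ∧ w x ≤ C * ‖x‖ ^ α₂) ∧
    (∀ x : Pt n, ‖x‖ ≤ 1 → C⁻¹ * ‖x‖ ^ α₂ ≤ w x ∧ w x ≤ C * ‖x‖ ^ α₁)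

/-- The map `f_d(x) = A⁻¹(x + d)` of the self-affine IFS. -/
def fIFS {n : ℕ} (A : Matrix (Fin n) (Fin n) ℝ) (d : Pt n) (x : Pt n) : Pt n :=
  mapp A⁻¹ (x + d)

/-- The open set condition for the IFS `{f_d}_{d ∈ D}`. -/
def OSC {n : ℕ} (A : Matrix (Fin n) (Fin n) ℝ) (D : Finset (Pt n)) : Prop :=
  ∃ V : Set (Pt n), V.Nonempty ∧ IsOpen V ∧ Bornology.IsBounded V ∧
    (⋃ d ∈ D, fIFS A d '' V) ⊆ V ∧
    ∀ d ∈ D, ∀ d' ∈ D, d ≠ d' → fIFS A d '' V ∩ fIFS A d' '' V = ∅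

/-- `K` is the self-affine set (attractor) for the pair `(A, D)`:
a nonempty compact set with `A K = ⋃_{d ∈ D} (K + d)`. -/
def IsSelfAffineSet {n : ℕ} (A : Matrix (Fin n) (Fin n) ℝ) (D : Finset (Pt n))
    (K : Set (Pt n)) : Prop :=
  K.Nonempty ∧ IsCompact K ∧ mapp A '' K = ⋃ d ∈ D, (fun x => x + d) '' K

/-- The set `𝒟_M` of `M`-fold expansions `Σ_{j<M} A^j d_j`. -/
def DsetM {n : ℕ} (A : Matrix (Fin n) (Fin n) ℝ) (D : Finset (Pt n)) (M : ℕ) :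
    Set (Pt n) :=
  {x | ∃ d : Fin M → Pt n, (∀ j, d j ∈ D) ∧ x = ∑ j : Fin M, mapp (A ^ (j : ℕ)) (d j)}

/-- The set `𝒟_∞ = ⋃_{M ≥ 1} 𝒟_M`. -/
def DsetInf {n : ℕ} (A : Matrix (Fin n) (Fin n) ℝ) (D : Finset (Pt n)) : Set (Pt n) :=
  ⋃ (M : ℕ) (_ : 1 ≤ M), DsetM A D M

/-- A set is uniformly discrete if distinct points are uniformly separated. -/
def UniformlyDiscrete {n : ℕ} (S : Set (Pt n)) : Prop :=
  ∃ δ > (0 : ℝ), ∀ x ∈ S, ∀ y ∈ S, x ≠ y → δ < ‖x - y‖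

/-- `σ` is the invariant (self-affine) probability measure of the IFS `{f_d}_{d ∈ D}`. -/
def IsInvariantMeasure {n : ℕ} (A : Matrix (Fin n) (Fin n) ℝ) (D : Finset (Pt n))
    (σ : Measure (Pt n)) : Prop :=
  IsProbabilityMeasure σ ∧
  ∀ f : Pt n → ℝ, Continuous f → HasCompactSupport f →
    ∫ x, f x ∂σ = ((D.card : ℝ))⁻¹ * ∑ d ∈ D, ∫ x, f (fIFS A d x) ∂σ

/-- The measure `μ_M = Σ_{d_0,…,d_{M−1} ∈ 𝒟} δ_{d_0 + A d_1 + ⋯ + A^{M−1} d_{M−1}}`. -/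
def muM {n : ℕ} (A : Matrix (Fin n) (Fin n) ℝ) (D : Finset (Pt n)) (M : ℕ) :
    Measure (Pt n) :=
  ∑ d ∈ (Finset.univ : Finset (Fin M → {x : Pt n // x ∈ D})),
    Measure.dirac (∑ j : Fin M, mapp (A ^ (j : ℕ)) ((d j : Pt n)))

/-- Convolution of two Borel measures on `ℝⁿ`. -/
def mconv {n : ℕ} (μ ν : Measure (Pt n)) : Measure (Pt n) :=
  Measure.map (fun p : Pt n × Pt n => p.1 + p.2) (μ.prod ν)

/-- The upper `s`-density `ℰ⁺_{w,s}(ν)` of a Borel measure `ν` w.r.t. the pseudo norm `w`. -/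
def upperDensity {n : ℕ} (w : Pt n → ℝ) (s : ℝ) (ν : Measure (Pt n)) : ℝ≥0∞ :=
  ⨅ (r : ℝ) (_ : 0 < r),
    ⨆ (U : Set (Pt n)) (_ : IsCompact U) (_ : Convex ℝ U)
      (_ : ENNReal.ofReal r ≤ pdiam w U), ν U / pdiam w U ^ s

/-- The upper convex `s`-density `D^s_{w,c}(E, x)` of `E` at `x` w.r.t. `w`. -/
def upperConvexDensity {n : ℕ} (w : Pt n → ℝ) (s : ℝ) (E : Set (Pt n)) (x : Pt n) :
    ℝ≥0∞ :=
  ⨅ (r : ℝ) (_ : 0 < r),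
    ⨆ (U : Set (Pt n)) (_ : Convex ℝ U) (_ : x ∈ U) (_ : 0 < pdiam w U)
      (_ : pdiam w U ≤ ENNReal.ofReal r), Hw w s (E ∩ U) / pdiam w U ^ s

/-- The pseudo Hausdorff dimension `dim_H^w E = inf {s ≥ 0 : ℋ^s_w(E) = 0}`. -/
def dimHw {n : ℕ} (w : Pt n → ℝ) (E : Set (Pt n)) : ℝ≥0∞ :=
  ⨅ (t : ℝ≥0) (_ : Hw w (t : ℝ) E = 0), (t : ℝ≥0∞)

/-- `𝒱` is a Vitali class for `E` w.r.t. `w`. -/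
def VitaliClass {n : ℕ} (w : Pt n → ℝ) (𝒱 : Set (Set (Pt n))) (E : Set (Pt n)) : Prop :=
  ∀ x ∈ E, ∀ δ : ℝ, 0 < δ →
    ∃ U ∈ 𝒱, x ∈ U ∧ 0 < pdiam w U ∧ pdiam w U ≤ ENNReal.ofReal δ

/-- The composite map `f_𝐢 = f_{i₁} ∘ ⋯ ∘ f_{i_m}` associated with a word of digits. -/
def fWord {n : ℕ} (A : Matrix (Fin n) (Fin n) ℝ) (i : List (Pt n)) (x : Pt n) : Pt n :=
  i.foldr (fun d y => fIFS A d y) x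

/-!
The ratio `w (x₁ + x₂) / w x₂` is invariant under replacing `(x₁, x₂)` by `(A^k x₁, A^k x₂)`,
`k ∈ ℤ`, since `w` is homogeneous for the dilation `A` with factor `q^{1/n} > 1`. Rescaling
therefore puts `x₂` in the compact annulus `1 ≤ w ≤ q^{1/n}`, on which `w (u + v) < (1 + ε) w v`
holds uniformly for `u` in a neighbourhood of `0` (tube lemma); and `λ_ε w x₁ < w x₂` makes
the rescaled `x₁` lie in that neighbourhood once `λ_ε` is large, because the sets `{w < τ}`
form a neighbourhood basis of `0`.
-/

open Filter Topology

open Polynomial in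
theorem one_lt_abs_det_of_isExpandingMatrix {n : ℕ} (hn : 0 < n)
    {A : Matrix (Fin n) (Fin n) ℝ} (hA : IsExpandingMatrix A) : 1 < |A.det| := by
  set B := A.map (fun a => (a : ℂ))
  have hroots : B.charpoly.roots ≠ 0 := by
    rw [← Multiset.card_pos, IsAlgClosed.card_roots_eq_natDegree,
      Matrix.charpoly_natDegree_eq_dim, Fintype.card_fin]
    exact hn
  have h := Multiset.prod_induction_nonempty (fun z : ℂ => 1 < ‖z‖)
    (fun a b ha hb => by rw [norm_mul]; nlinarith) hroots
    fun μ hμ => hA μ (Matrix.mem_spectrum_iff_isRoot_charpoly.2 (isRoot_of_mem_roots hμ))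
  rwa [← Matrix.det_eq_prod_roots_charpoly, show B = (algebraMap ℝ ℂ).mapMatrix A from rfl,
    ← RingHom.map_det, Complex.coe_algebraMap, Complex.norm_real, Real.norm_eq_abs] at h

theorem isUnit_toEuclideanLin_of_isUnit_det {n : ℕ} {A : Matrix (Fin n) (Fin n) ℝ}
    (h : IsUnit A.det) : IsUnit (Matrix.toEuclideanLin A) := by
  rw [LinearMap.isUnit_iff_isUnit_det, Matrix.toEuclideanLin_eq_toLin_orthonormal,
    LinearMap.det_toLin]
  exact h

theorem apply_zpow_smul {G E : Type*} [Group G] [MulAction G E] {w : E → ℝ} {g : G} {c : ℝ}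
    (hc : c ≠ 0) (hg : ∀ x, w (g • x) = c * w x) (k : ℤ) (x : E) :
    w ((g ^ k) • x) = c ^ k * w x := by
  induction k using Int.induction_on generalizing x with
  | zero => simp
  | succ k ih => rw [zpow_add_one, mul_smul, ih, hg, zpow_add_one₀ hc]; ring
  | pred k ih =>
    have hinv := hg (g⁻¹ • x)
    rw [smul_inv_smul] at hinv
    rw [zpow_sub_one, mul_smul, ih, zpow_sub_one₀ hc, hinv]
    field_simp

theorem eventually_nhds_zero_forall_add_lt {E : Type*} [TopologicalSpace E] [AddZeroClass E]
    [ContinuousAdd E] {w : E → ℝ} (hw : Continuous w) {S : Set E} (hS : IsCompact S)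
    (hpos : ∀ v ∈ S, 0 < w v) {ε : ℝ} (hε : 0 < ε) :
    ∀ᶠ u in 𝓝 0, ∀ v ∈ S, w (u + v) < (1 + ε) * w v := by
  refine hS.eventually_forall_of_forall_eventually fun v hv => ?_
  refine ContinuousAt.eventually_lt (by fun_prop) (by fun_prop) ?_
  simpa using lt_mul_of_one_lt_left (hpos v hv) (lt_add_of_pos_right 1 hε)

theorem exists_one_lt_forall_add_lt_one_add_mul {G E : Type*} [Group G] [AddGroup E]
    [TopologicalSpace E] [ContinuousAdd E] [DistribMulAction G E] {w : E → ℝ}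
    (hw : Continuous w) (hw0 : ∀ x, 0 ≤ w x)
    (hbasis : (𝓝 (0 : E)).HasBasis (0 < ·) fun τ => {u | w u < τ})
    (hproper : ∀ b, IsCompact {v | w v ≤ b}) {g : G} {c : ℝ} (hc : 1 < c)
    (hg : ∀ x, w (g • x) = c * w x) {ε : ℝ} (hε : 0 < ε) :
    ∃ lam : ℝ, 1 < lam ∧ ∀ x₁ x₂ : E, lam * w x₁ < w x₂ → w (x₁ + x₂) < (1 + ε) * w x₂ := by
  set S := {v | 1 ≤ w v ∧ w v ≤ c}
  have hS : IsCompact S := (hproper c).of_isClosed_subset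
    ((isClosed_le continuous_const hw).inter (isClosed_le hw continuous_const)) fun v hv => hv.2
  obtain ⟨τ, hτ, hτS⟩ := hbasis.mem_iff.1
    (eventually_nhds_zero_forall_add_lt hw hS (fun v hv => one_pos.trans_le hv.1) hε)
  have hc0 : 0 < c := one_pos.trans hc
  refine ⟨1 + c / τ, by simp only [lt_add_iff_pos_right]; positivity, fun x₁ x₂ h => ?_⟩
  have hx₂ : 0 < w x₂ := (mul_nonneg (by positivity) (hw0 x₁)).trans_lt h
  obtain ⟨k, hk, hk'⟩ := exists_mem_Ico_zpow hx₂ hc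
  have hp : 0 < c ^ k := zpow_pos hc0 k
  rw [zpow_add_one₀ hc0.ne'] at hk'
  have hscale (x : E) : w (g ^ (-k) • x) = (c ^ k)⁻¹ * w x := by
    rw [apply_zpow_smul hc0.ne' hg, zpow_neg]
  have h₂ : g ^ (-k) • x₂ ∈ S := by
    rw [Set.mem_ofPred_eq, hscale, le_inv_mul_iff₀ hp, inv_mul_le_iff₀ hp, mul_one]
    exact ⟨hk, hk'.le⟩
  have h₁ : w (g ^ (-k) • x₁) < τ := by
    rw [hscale, inv_mul_lt_iff₀ hp]
    by_contra! hle
    have : c ^ k * c ≤ c / τ * w x₁ :=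
      calc c ^ k * c = c / τ * (c ^ k * τ) := by field_simp
        _ ≤ c / τ * w x₁ := by gcongr
    linarith [hw0 x₁]
  have key := hτS h₁ _ h₂
  rw [← smul_add, hscale, hscale, mul_left_comm] at key
  exact lt_of_mul_lt_mul_left key (inv_pos.2 hp).le

namespace IsPseudoNorm

variable {n : ℕ} {A : Matrix (Fin n) (Fin n) ℝ} {w : Pt n → ℝ}

theorem exists_mul_min_rpow_le (hw : IsPseudoNorm A w) :
    ∃ C > (0 : ℝ), ∃ α > (0 : ℝ), ∀ x, C * min ‖x‖ 1 ^ α ≤ w x := by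
  obtain ⟨C, hC, α₁, hα₁, α₂, hα₂, hbig, hsmall⟩ := hw.comparable
  refine ⟨C⁻¹, inv_pos.2 hC, α₂, hα₂, fun x => ?_⟩
  rcases le_or_gt ‖x‖ 1 with hx | hx
  · rw [min_eq_left hx]
    exact (hsmall x hx).1
  · rw [min_eq_right hx.le, Real.one_rpow, mul_one]
    exact (le_mul_of_one_le_right (inv_pos.2 hC).le (Real.one_le_rpow hx.le hα₁.le)).trans
      (hbig x hx).1

theorem hasBasis_nhds_zero (hw : IsPseudoNorm A w) :
    (𝓝 (0 : Pt n)).HasBasis (0 < ·) fun τ => {u | w u < τ} := by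
  obtain ⟨C, hC, α, hα, hlow⟩ := hw.exists_mul_min_rpow_le
  refine Metric.nhds_basis_ball.to_hasBasis
    (fun η hη => ⟨C * min η 1 ^ α, by positivity, fun u hu => ?_⟩) fun τ hτ => ?_
  · rw [mem_ball_zero_iff]
    by_contra! hηu
    have := Real.rpow_le_rpow (by positivity) (min_le_min_right 1 hηu) hα.le
    exact hu.not_ge ((mul_le_mul_of_nonneg_left this hC.le).trans (hlow u))
  · have hw0 : w 0 < τ := by rwa [(hw.eq_zero_iff 0).2 rfl]
    exact Metric.mem_nhds_iff.1 ((isOpen_lt hw.continuous continuous_const).mem_nhds hw0)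

theorem isCompact_setOf_le (hw : IsPseudoNorm A w) (b : ℝ) : IsCompact {v | w v ≤ b} := by
  obtain ⟨C, hC, α₁, hα₁, _, _, hbig, -⟩ := hw.comparable
  refine Metric.isCompact_of_isClosed_isBounded (isClosed_le hw.continuous continuous_const)
    ((Metric.isBounded_closedBall (x := 0) (r := max 1 ((C * b) ^ α₁⁻¹))).subset fun v hv => ?_)
  rw [mem_closedBall_zero_iff]
  rcases le_or_gt ‖v‖ 1 with h1 | h1
  · exact h1.trans (le_max_left _ _)
  · have hv' : ‖v‖ ^ α₁ ≤ C * b := (inv_mul_le_iff₀ hC).1 ((hbig v h1).1.trans hv)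
    refine le_max_of_le_right ((Real.le_rpow_inv_iff_of_pos (norm_nonneg v) ?_ hα₁).2 hv')
    exact (Real.rpow_nonneg (norm_nonneg v) α₁).trans hv'

end IsPseudoNorm

theorem stmt4_general {n : ℕ} (hn : 0 < n) (A : Matrix (Fin n) (Fin n) ℝ)
    (hA : IsExpandingMatrix A)
    (w : Pt n → ℝ) (hw : IsPseudoNorm A w)
    (ε : ℝ) (hε : 0 < ε) :
    ∃ lam : ℝ, 1 < lam ∧
      ∀ x₁ x₂ : Pt n, lam * w x₁ < w x₂ → w (x₁ + x₂) < (1 + ε) * w x₂ := by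
  have hdet : 1 < |A.det| := one_lt_abs_det_of_isExpandingMatrix hn hA
  have hunit : IsUnit (Matrix.toEuclideanLin A) :=
    isUnit_toEuclideanLin_of_isUnit_det (isUnit_iff_ne_zero.2 (abs_pos.1 (one_pos.trans hdet)))
  exact exists_one_lt_forall_add_lt_one_add_mul hw.continuous hw.nonneg hw.hasBasis_nhds_zero
    hw.isCompact_setOf_le (g := hunit.unit) (Real.one_lt_rpow hdet (by positivity)) hw.scaling hε

/-- Lemma 2.4: for every `ε > 0` there is `λ_ε > 1` such that
`w(x₂) > λ_ε w(x₁)` implies `w(x₁ + x₂) < (1 + ε) w(x₂)`. -/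
theorem stmt4 {n : ℕ} (hn : 0 < n) (A : Matrix (Fin n) (Fin n) ℝ)
    (hA : IsExpandingMatrix A)
    (hAnorm : ∀ x : Pt n, ‖x‖ ≤ ‖mapp A x‖)
    (hAeq : ∀ x : Pt n, ‖x‖ = ‖mapp A x‖ → x = 0)
    (w : Pt n → ℝ) (hw : IsPseudoNorm A w)
    (ε : ℝ) (hε : 0 < ε) :
    ∃ lam : ℝ, 1 < lam ∧
      ∀ x₁ x₂ : Pt n, lam * w x₁ < w x₂ → w (x₁ + x₂) < (1 + ε) * w x₂ :=
  stmt4_general hn A hA w hw ε hε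
end
end

section
/- Suppose 0 < ℋ^s_w(K) < ∞, where s = n·ln(#𝒟)/ln q. Then σ(E) = ℋ^s_w(E ∩ K)/ℋ^s_w(K) for every Borel set E ⊆ ℝⁿ; that is, σ is the restriction of ℋ^s_w to K normalized to total mass 1. -/
open MeasureTheory Set ENNReal NNReal

noncomputable section

/-!
For `s > 0` the pseudo norm dominates the Euclidean norm near `0`, so `ℋ^s_w` is a metric
outer measure and restricts to a Borel measure `μ`. Each `f_d` scales `w` by `q^(-1/n)`, which
by the choice of `s` scales `ℋ^s_w` by `(#𝒟)⁻¹`. Since `K = ⋃ f_d(K)` and `ℋ^s_w(K) < ∞`, the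
pieces `f_d(K)` overlap in `μ`-null sets, so the normalized restriction of `μ` to `K` is
invariant.

It is the only invariant probability measure: `‖A⁻¹x‖ < ‖x‖` makes the `f_d` uniform
contractions, so for any invariant `τ` and compactly supported continuous `g`, the iterates of
the Markov operator `P g = (#𝒟)⁻¹ ∑ g ∘ f_d` become nearly constant on large balls, and
`P^m g(x₀) → ∫ g dτ` for every `τ`.
-/

open Filter Topology

section PseudoHausdorff
variable {n : ℕ} {w : Pt n → ℝ} {s δ : ℝ}

lemma pdiam_le_iff {E : Set (Pt n)} {c : ℝ≥0∞} :
    pdiam w E ≤ c ↔ ∀ x ∈ E, ∀ y ∈ E, ENNReal.ofReal (w (x - y)) ≤ c := by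
  simp [pdiam, iSup_le_iff]

lemma ofReal_le_pdiam {E : Set (Pt n)} {x y : Pt n} (hx : x ∈ E) (hy : y ∈ E) :
    ENNReal.ofReal (w (x - y)) ≤ pdiam w E :=
  le_iSup₂_of_le x hx (le_iSup₂_of_le y hy le_rfl)

@[simp] lemma pdiam_empty : pdiam w (∅ : Set (Pt n)) = 0 := by simp [pdiam]

lemma pdiam_mono {E F : Set (Pt n)} (h : E ⊆ F) : pdiam w E ≤ pdiam w F :=
  pdiam_le_iff.2 fun _ hx _ hy => ofReal_le_pdiam (h hx) (h hy)

lemma preHw_le_of_cover {E : Set (Pt n)} (U : ℕ → Set (Pt n))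
    (hc : E ⊆ ⋃ i, U i) (hd : ∀ i, pdiam w (U i) ≤ ENNReal.ofReal δ) :
    preHw w s δ E ≤ ∑' i, pdiam w (U i) ^ s :=
  iInf_le_of_le U <| iInf_le_of_le hc <| iInf_le _ hd

lemma preHw_mono {E F : Set (Pt n)} (h : E ⊆ F) : preHw w s δ E ≤ preHw w s δ F :=
  le_iInf fun U => le_iInf fun hc => le_iInf fun hd => preHw_le_of_cover U (h.trans hc) hd

lemma preHw_anti {E : Set (Pt n)} {δ' : ℝ} (h : δ' ≤ δ) :
    preHw w s δ E ≤ preHw w s δ' E :=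
  le_iInf fun U => le_iInf fun hc => le_iInf fun hd =>
    preHw_le_of_cover U hc fun i => (hd i).trans (ENNReal.ofReal_le_ofReal h)

lemma preHw_le_Hw {E : Set (Pt n)} (hδ : 0 < δ) : preHw w s δ E ≤ Hw w s E :=
  le_iSup₂_of_le δ hδ le_rfl

lemma Hw_mono {E F : Set (Pt n)} (h : E ⊆ F) : Hw w s E ≤ Hw w s F :=
  iSup₂_le fun _ hδ => (preHw_mono h).trans (preHw_le_Hw hδ)

lemma preHw_empty (hs : 0 < s) : preHw w s δ (∅ : Set (Pt n)) = 0 :=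
  le_antisymm ((preHw_le_of_cover (fun _ => ∅) (by simp) (by simp)).trans
    (by simp [ENNReal.zero_rpow_of_pos hs])) zero_le

lemma Hw_empty (hs : 0 < s) : Hw w s (∅ : Set (Pt n)) = 0 := by
  simp [Hw, preHw_empty hs]

lemma preHw_iUnion_le (E : ℕ → Set (Pt n)) :
    preHw w s δ (⋃ k, E k) ≤ ∑' k, preHw w s δ (E k) := by
  refine ENNReal.le_of_forall_pos_le_add fun ε hε hlt => ?_
  obtain ⟨ε', hε'pos, hε'sum⟩ :=
    ENNReal.exists_pos_sum_of_countable (ε := (ε : ℝ≥0∞)) (by exact_mod_cast hε.ne') ℕ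
  have hcover : ∀ k, ∃ U : ℕ → Set (Pt n), (E k ⊆ ⋃ i, U i) ∧
      (∀ i, pdiam w (U i) ≤ ENNReal.ofReal δ) ∧
      ∑' i, pdiam w (U i) ^ s < preHw w s δ (E k) + ε' k := by
    intro k
    have hk : preHw w s δ (E k) < preHw w s δ (E k) + ε' k :=
      ENNReal.lt_add_right (ne_top_of_le_ne_top hlt.ne (ENNReal.le_tsum k))
        (by exact_mod_cast (hε'pos k).ne')
    simpa only [preHw, iInf_lt_iff, exists_prop] using hk
  choose U hUc hUd hUs using hcover
  let e : ℕ ≃ ℕ × ℕ := (Denumerable.eqv (ℕ × ℕ)).symm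
  refine (preHw_le_of_cover (fun i => U (e i).1 (e i).2) ?_ fun i => hUd _ _).trans ?_
  · intro x hx
    obtain ⟨k, hk⟩ := mem_iUnion.1 hx
    obtain ⟨j, hj⟩ := mem_iUnion.1 (hUc k hk)
    exact mem_iUnion.2 ⟨e.symm (k, j), by simpa using hj⟩
  · calc ∑' i, pdiam w (U (e i).1 (e i).2) ^ s
        = ∑' k, ∑' j, pdiam w (U k j) ^ s :=
          (e.tsum_eq fun p : ℕ × ℕ => pdiam w (U p.1 p.2) ^ s).trans
            (ENNReal.tsum_prod (f := fun k j => pdiam w (U k j) ^ s))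
      _ ≤ ∑' k, (preHw w s δ (E k) + ε' k) := ENNReal.tsum_le_tsum fun k => (hUs k).le
      _ = ∑' k, preHw w s δ (E k) + ∑' k, (ε' k : ℝ≥0∞) := ENNReal.tsum_add
      _ ≤ ∑' k, preHw w s δ (E k) + ε := by gcongr

lemma Hw_iUnion_le (E : ℕ → Set (Pt n)) : Hw w s (⋃ k, E k) ≤ ∑' k, Hw w s (E k) :=
  iSup₂_le fun _ hδ => (preHw_iUnion_le E).trans (ENNReal.tsum_le_tsum fun _ => preHw_le_Hw hδ)

lemma Hw_eq_top_of_nonpos (hs : s ≤ 0) (E : Set (Pt n)) : Hw w s E = ⊤ := by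
  refine top_le_iff.1 ((le_iInf fun U => le_iInf fun _ => le_iInf fun hd => ?_).trans
    (preHw_le_Hw (E := E) one_pos))
  have hterm : ∀ i, 1 ≤ pdiam w (U i) ^ s := fun i => by
    simpa using ENNReal.rpow_le_rpow_of_exponent_ge (by simpa using hd i) hs
  calc (⊤ : ℝ≥0∞) = ∑' _ : ℕ, 1 :=
        (ENNReal.tsum_const_eq_top_of_ne_zero one_ne_zero).symm
    _ ≤ ∑' i, pdiam w (U i) ^ s := ENNReal.tsum_le_tsum hterm

end PseudoHausdorff

section Borel
variable {n : ℕ} {w : Pt n → ℝ} {s : ℝ}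

lemma preHw_add_le_union (hs : 0 < s) {δ ρ : ℝ} (hδ : 0 ≤ δ) (hδρ : δ ≤ ρ)
    {S T : Set (Pt n)} (hST : ∀ x ∈ S, ∀ y ∈ T, ρ < w (x - y)) :
    preHw w s δ S + preHw w s δ T ≤ preHw w s δ (S ∪ T) := by
  refine le_iInf fun U => le_iInf fun hc => le_iInf fun hd => ?_
  have hcover : ∀ R ⊆ S ∪ T, R ⊆ ⋃ i, U i ∩ R := fun R hR x hx =>
    mem_iUnion.2 ((mem_iUnion.1 (hc (hR hx))).imp fun _ hi => ⟨hi, hx⟩)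
  have hsmall : ∀ R i, pdiam w (U i ∩ R) ≤ ENNReal.ofReal δ := fun R i =>
    (pdiam_mono inter_subset_left).trans (hd i)
  have hsplit : ∀ i, pdiam w (U i ∩ S) ^ s + pdiam w (U i ∩ T) ^ s ≤ pdiam w (U i) ^ s := by
    intro i
    have hmono : ∀ R, pdiam w (U i ∩ R) ^ s ≤ pdiam w (U i) ^ s := fun R =>
      ENNReal.rpow_le_rpow (pdiam_mono inter_subset_left) hs.le
    rcases (U i ∩ S).eq_empty_or_nonempty with hS | ⟨x, hxU, hxS⟩
    · simpa [hS, ENNReal.zero_rpow_of_pos hs] using hmono T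
    rcases (U i ∩ T).eq_empty_or_nonempty with hT | ⟨y, hyU, hyT⟩
    · simpa [hT, ENNReal.zero_rpow_of_pos hs] using hmono S
    have hfar : δ < w (x - y) := hδρ.trans_lt (hST x hxS y hyT)
    exact absurd ((ofReal_le_pdiam hxU hyU).trans (hd i))
      ((ENNReal.ofReal_lt_ofReal_iff (hδ.trans_lt hfar)).2 hfar).not_ge
  calc preHw w s δ S + preHw w s δ T
      ≤ ∑' i, pdiam w (U i ∩ S) ^ s + ∑' i, pdiam w (U i ∩ T) ^ s :=
        add_le_add (preHw_le_of_cover _ (hcover S subset_union_left) (hsmall S))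
          (preHw_le_of_cover _ (hcover T subset_union_right) (hsmall T))
    _ = ∑' i, (pdiam w (U i ∩ S) ^ s + pdiam w (U i ∩ T) ^ s) := ENNReal.tsum_add.symm
    _ ≤ ∑' i, pdiam w (U i) ^ s := ENNReal.tsum_le_tsum hsplit

lemma Hw_add_le_union (hs : 0 < s) {ρ : ℝ} (hρ : 0 < ρ) {S T : Set (Pt n)}
    (hST : ∀ x ∈ S, ∀ y ∈ T, ρ < w (x - y)) :
    Hw w s S + Hw w s T ≤ Hw w s (S ∪ T) := by
  refine ENNReal.biSup_add_biSup_le' ⟨ρ, hρ⟩ ⟨ρ, hρ⟩ fun δ₁ hδ₁ δ₂ hδ₂ => ?_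
  set δ := min δ₁ (min δ₂ ρ)
  have hδ : 0 < δ := lt_min hδ₁ (lt_min hδ₂ hρ)
  calc preHw w s δ₁ S + preHw w s δ₂ T ≤ preHw w s δ S + preHw w s δ T :=
        add_le_add (preHw_anti (min_le_left _ _))
          (preHw_anti ((min_le_right _ _).trans (min_le_left _ _)))
    _ ≤ preHw w s δ (S ∪ T) :=
        preHw_add_le_union hs hδ.le ((min_le_right _ _).trans (min_le_right _ _)) hST
    _ ≤ Hw w s (S ∪ T) := preHw_le_Hw hδ

lemma exists_measure_eq_Hw (hs : 0 < s)
    (hw : ∀ ε > 0, ∃ ρ > 0, ∀ z : Pt n, w z ≤ ρ → ‖z‖ ≤ ε) :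
    ∃ μ : Measure (Pt n), ∀ E, MeasurableSet E → μ E = Hw w s E := by
  let m : OuterMeasure (Pt n) :=
    ⟨Hw w s, Hw_empty hs, fun h => Hw_mono h, fun E _ => Hw_iUnion_le E⟩
  have hmetric : m.IsMetric := by
    rintro S T ⟨r, hr0, hr⟩
    obtain ⟨ε, -, hε, hεr⟩ := ENNReal.lt_iff_exists_real_btwn.1 (pos_iff_ne_zero.2 hr0)
    obtain ⟨ρ, hρ, hρε⟩ := hw ε (ENNReal.ofReal_pos.1 hε)
    refine le_antisymm (measure_union_le S T) (Hw_add_le_union hs hρ fun x hx y hy => ?_)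
    by_contra! hxy
    have hclose : edist x y < r := by
      rw [edist_dist, dist_eq_norm]
      exact (ENNReal.ofReal_le_ofReal (hρε _ hxy)).trans_lt hεr
    exact (hr x hx y hy).not_gt hclose
  have hle : (inferInstance : MeasurableSpace (Pt n)) ≤ m.caratheodory := by
    rw [BorelSpace.measurable_eq (α := Pt n)]
    exact hmetric.borel_le_caratheodory
  exact ⟨m.toMeasure hle, fun E hE => toMeasure_apply m hle hE⟩

end Borel

section Scaling
variable {n : ℕ} {w : Pt n → ℝ} {s : ℝ} {g : Pt n → Pt n} {c : ℝ}

lemma pdiam_image (hc : 0 ≤ c) (hg : ∀ x y, w (g x - g y) = c * w (x - y)) (U : Set (Pt n)) :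
    pdiam w (g '' U) = ENNReal.ofReal c * pdiam w U := by
  simp only [pdiam, iSup_image, hg, ENNReal.ofReal_mul hc, ENNReal.mul_iSup]

lemma Hw_image_le (hs : 0 ≤ s) (hc : 0 < c) (hg : ∀ x y, w (g x - g y) = c * w (x - y))
    (E : Set (Pt n)) : Hw w s (g '' E) ≤ ENNReal.ofReal c ^ s * Hw w s E := by
  have hc0 : ENNReal.ofReal c ^ s ≠ 0 :=
    (ENNReal.rpow_pos (ENNReal.ofReal_pos.2 hc) ENNReal.ofReal_ne_top).ne'
  have hctop : ENNReal.ofReal c ^ s ≠ ⊤ :=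
    ENNReal.rpow_ne_top_of_nonneg hs ENNReal.ofReal_ne_top
  refine iSup₂_le fun δ hδ => ?_
  refine le_trans ?_ (mul_le_mul_right (preHw_le_Hw (δ := δ / c) (by positivity)) _)
  simp only [preHw, ENNReal.mul_iInf_of_ne hc0 hctop]
  refine le_iInf fun U => le_iInf fun hcov => le_iInf fun hd => ?_
  refine (preHw_le_of_cover (fun i => g '' U i) ?_ fun i => ?_).trans ?_
  · rw [← image_iUnion]; exact image_mono hcov
  · rw [pdiam_image hc.le hg]
    calc ENNReal.ofReal c * pdiam w (U i) ≤ ENNReal.ofReal c * ENNReal.ofReal (δ / c) :=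
          mul_le_mul_right (hd i) _
      _ = ENNReal.ofReal δ := by rw [← ENNReal.ofReal_mul hc.le, mul_div_cancel₀ _ hc.ne']
  · simp only [pdiam_image hc.le hg, ENNReal.mul_rpow_of_nonneg _ _ hs, ENNReal.tsum_mul_left,
      le_refl]

lemma Hw_image (hs : 0 ≤ s) (hg : Function.Bijective g) (hc : 0 < c)
    (hgw : ∀ x y, w (g x - g y) = c * w (x - y)) (E : Set (Pt n)) :
    Hw w s (g '' E) = ENNReal.ofReal c ^ s * Hw w s E := by
  obtain ⟨g', hgl, hgr⟩ := Function.bijective_iff_has_inverse.1 hg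
  have hg'w : ∀ x y, w (g' x - g' y) = c⁻¹ * w (x - y) := fun x y => by
    rw [← hgr x, ← hgr y, hgl, hgl, hgw, inv_mul_cancel_left₀ hc.ne']
  have hback := Hw_image_le hs (inv_pos.2 hc) hg'w (g '' E)
  rw [image_image, funext hgl, image_id'] at hback
  refine le_antisymm (Hw_image_le hs hc hgw E) ?_
  calc ENNReal.ofReal c ^ s * Hw w s E
      ≤ ENNReal.ofReal c ^ s * (ENNReal.ofReal c⁻¹ ^ s * Hw w s (g '' E)) := by gcongr
    _ = Hw w s (g '' E) := by
        rw [← mul_assoc, ← ENNReal.mul_rpow_of_nonneg _ _ hs, ← ENNReal.ofReal_mul hc.le,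
          mul_inv_cancel₀ hc.ne', ENNReal.ofReal_one, ENNReal.one_rpow, one_mul]

end Scaling

section FiniteUnion
variable {α ι : Type*} [MeasurableSpace α] {μ : Measure α} {D : Finset ι}

lemma measure_inter_biUnion_of_measure_biUnion_eq_sum {S : ι → Set α}
    (hS : μ (⋃ i ∈ D, S i) = ∑ i ∈ D, μ (S i)) (hfin : μ (⋃ i ∈ D, S i) ≠ ⊤)
    {F : Set α} (hF : MeasurableSet F) :
    μ (F ∩ ⋃ i ∈ D, S i) = ∑ i ∈ D, μ (F ∩ S i) := by
  have hin : μ (F ∩ ⋃ i ∈ D, S i) ≤ ∑ i ∈ D, μ (F ∩ S i) := by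
    rw [inter_iUnion₂]; exact measure_biUnion_finset_le _ _
  have hout : μ ((⋃ i ∈ D, S i) \ F) ≤ ∑ i ∈ D, μ (S i \ F) := by
    simp only [sdiff_eq, iUnion₂_inter]; exact measure_biUnion_finset_le _ _
  have htotal : ∑ i ∈ D, μ (F ∩ S i) + ∑ i ∈ D, μ (S i \ F) ≤
      μ (F ∩ ⋃ i ∈ D, S i) + μ ((⋃ i ∈ D, S i) \ F) := by
    simp_rw [← Finset.sum_add_distrib, inter_comm F, measure_inter_add_sdiff _ hF, ← hS]
    rfl
  have hfin' : ∑ i ∈ D, μ (S i \ F) ≠ ⊤ :=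
    ne_top_of_le_ne_top (hS ▸ hfin) (Finset.sum_le_sum fun i _ => measure_mono sdiff_subset)
  exact le_antisymm hin
    (ENNReal.le_of_add_le_add_right hfin' (htotal.trans (add_le_add_right hout _)))

lemma restrict_eq_smul_sum_map_restrict {f : ι → α → α} {K : Set α} (hD : D.Nonempty)
    (hK : K = ⋃ d ∈ D, f d '' K) (hKm : MeasurableSet K) (hKfin : μ K ≠ ⊤)
    (hf : ∀ d ∈ D, MeasurableEmbedding (f d))
    (hscale : ∀ d ∈ D, ∀ E, MeasurableSet E →
      μ (f d '' E) = (D.card : ℝ≥0∞)⁻¹ * μ E) :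
    μ.restrict K = (D.card : ℝ≥0∞)⁻¹ • ∑ d ∈ D, (μ.restrict K).map (f d) := by
  ext F hF
  have hN : (D.card : ℝ≥0∞) ≠ 0 := by simpa using hD.card_pos.ne'
  have hsum : μ (⋃ d ∈ D, f d '' K) = ∑ d ∈ D, μ (f d '' K) := by
    rw [← hK, Finset.sum_congr rfl fun d hd => hscale d hd K hKm, Finset.sum_const,
      nsmul_eq_mul, ← mul_assoc, ENNReal.mul_inv_cancel hN (ENNReal.natCast_ne_top _), one_mul]
  have himage : ∀ d ∈ D,
      μ (F ∩ f d '' K) = (D.card : ℝ≥0∞)⁻¹ * μ (f d ⁻¹' F ∩ K) :=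
    fun d hd => by
      rw [← image_preimage_inter, hscale d hd _ (((hf d hd).measurable hF).inter hKm)]
  calc μ.restrict K F = μ (F ∩ ⋃ d ∈ D, f d '' K) := by
        rw [← hK, Measure.restrict_apply hF]
    _ = ∑ d ∈ D, μ (F ∩ f d '' K) :=
        measure_inter_biUnion_of_measure_biUnion_eq_sum hsum (by rwa [← hK]) hF
    _ = ((D.card : ℝ≥0∞)⁻¹ • ∑ d ∈ D, (μ.restrict K).map (f d)) F := by
        rw [Measure.smul_apply, Measure.finsetSum_apply, smul_eq_mul, Finset.mul_sum]
        refine Finset.sum_congr rfl fun d hd => ?_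
        rw [himage d hd, (hf d hd).map_apply, Measure.restrict_apply ((hf d hd).measurable hF)]

end FiniteUnion

section MarkovOperator
variable {X ι : Type*} {D : Finset ι} {f : ι → X → X}

def ifsMarkovOp (D : Finset ι) (f : ι → X → X) (g : X → ℝ) (x : X) : ℝ :=
  (D.card : ℝ)⁻¹ * ∑ d ∈ D, g (f d x)

lemma abs_ifsMarkovOp_sub_le (hD : D.Nonempty) {g h : X → ℝ} {x y : X} {ε : ℝ}
    (hgh : ∀ d ∈ D, |g (f d x) - h (f d y)| ≤ ε) :
    |ifsMarkovOp D f g x - ifsMarkovOp D f h y| ≤ ε := by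
  have hN : (0 : ℝ) < D.card := by exact_mod_cast hD.card_pos
  rw [ifsMarkovOp, ifsMarkovOp, ← mul_sub, ← Finset.sum_sub_distrib, abs_mul,
    abs_of_pos (inv_pos.2 hN), inv_mul_le_iff₀ hN]
  calc |∑ d ∈ D, (g (f d x) - h (f d y))| ≤ ∑ d ∈ D, |g (f d x) - h (f d y)| :=
        Finset.abs_sum_le_sum_abs _ _
    _ ≤ D.card * ε := by simpa using Finset.sum_le_sum hgh

lemma abs_ifsMarkovOp_iterate_le (hD : D.Nonempty) {g : X → ℝ} {M : ℝ}
    (hg : ∀ x, |g x| ≤ M) (m : ℕ) (x : X) : |(ifsMarkovOp D f)^[m] g x| ≤ M := by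
  induction m generalizing x with
  | zero => exact hg x
  | succ m ih =>
    rw [Function.iterate_succ_apply']
    have hzero : ifsMarkovOp D f 0 x = 0 := by simp [ifsMarkovOp]
    have h := abs_ifsMarkovOp_sub_le (h := 0) (y := x) hD fun d _ => by simpa using ih (f d x)
    rwa [hzero, sub_zero] at h

variable [MetricSpace X]

lemma abs_ifsMarkovOp_iterate_sub_le (hD : D.Nonempty) {r : ℝ≥0}
    (hf : ∀ d ∈ D, LipschitzWith r (f d)) {g : X → ℝ} {η ε : ℝ}
    (hg : ∀ x y, dist x y ≤ η → |g x - g y| ≤ ε) (m : ℕ) (x y : X)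
    (hxy : r ^ m * dist x y ≤ η) :
    |(ifsMarkovOp D f)^[m] g x - (ifsMarkovOp D f)^[m] g y| ≤ ε := by
  induction m generalizing x y with
  | zero => simpa using hg x y (by simpa using hxy)
  | succ m ih =>
    rw [Function.iterate_succ_apply']
    refine abs_ifsMarkovOp_sub_le hD fun d hd => ih _ _ ?_
    calc (r : ℝ) ^ m * dist (f d x) (f d y) ≤ r ^ m * (r * dist x y) := by
          gcongr; exact (hf d hd).dist_le_mul x y
      _ = r ^ (m + 1) * dist x y := by ring
      _ ≤ η := hxy

lemma continuous_ifsMarkovOp (hf : ∀ d ∈ D, Continuous (f d)) {g : X → ℝ}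
    (hg : Continuous g) : Continuous (ifsMarkovOp D f g) :=
  continuous_const.mul (continuous_finsetSum _ fun d hd => hg.comp (hf d hd))

lemma hasCompactSupport_ifsMarkovOp (hf : ∀ d ∈ D, IsClosedEmbedding (f d)) {g : X → ℝ}
    (hg : HasCompactSupport g) : HasCompactSupport (ifsMarkovOp D f g) := by
  have hfun : ifsMarkovOp D f g = (fun _ => (D.card : ℝ)⁻¹) * ∑ d ∈ D, g ∘ f d := by
    ext x; simp [ifsMarkovOp, Finset.sum_apply]
  rw [hfun]
  exact (HasCompactSupport.finset_sum fun d hd => hg.comp_isClosedEmbedding (hf d hd)).mul_left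

lemma ifsMarkovOp_iterate_continuous_hasCompactSupport (hf : ∀ d ∈ D, IsClosedEmbedding (f d))
    {g : X → ℝ} (hg : Continuous g) (hgc : HasCompactSupport g) (m : ℕ) :
    Continuous ((ifsMarkovOp D f)^[m] g) ∧ HasCompactSupport ((ifsMarkovOp D f)^[m] g) := by
  induction m with
  | zero => exact ⟨hg, hgc⟩
  | succ m ih =>
    rw [Function.iterate_succ_apply']
    exact ⟨continuous_ifsMarkovOp (fun d hd => (hf d hd).continuous) ih.1,
      hasCompactSupport_ifsMarkovOp hf ih.2⟩

variable [MeasurableSpace X]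

def IsIFSInvariant (D : Finset ι) (f : ι → X → X) (τ : Measure X) : Prop :=
  ∀ g : X → ℝ, Continuous g → HasCompactSupport g →
    ∫ x, g x ∂τ = (D.card : ℝ)⁻¹ * ∑ d ∈ D, ∫ x, g (f d x) ∂τ

variable [BorelSpace X]

lemma isIFSInvariant_of_eq_smul_sum_map {ν : Measure X} [IsFiniteMeasure ν]
    (hf : ∀ d ∈ D, Continuous (f d))
    (hν : ν = (D.card : ℝ≥0∞)⁻¹ • ∑ d ∈ D, ν.map (f d)) :
    IsIFSInvariant D f ν := by
  intro g hg hgc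
  conv_lhs => rw [hν]
  rw [integral_smul_measure, integral_finsetSum_measure fun d _ =>
    hg.integrable_of_hasCompactSupport hgc, ENNReal.toReal_inv, ENNReal.toReal_natCast, smul_eq_mul]
  congr 1
  exact Finset.sum_congr rfl fun d hd =>
    integral_map (hf d hd).aemeasurable hg.aestronglyMeasurable

lemma IsIFSInvariant.integral_ifsMarkovOp {τ : Measure X} [IsFiniteMeasure τ]
    (hτ : IsIFSInvariant D f τ) (hf : ∀ d ∈ D, IsClosedEmbedding (f d))
    {g : X → ℝ} (hg : Continuous g) (hgc : HasCompactSupport g) :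
    ∫ x, ifsMarkovOp D f g x ∂τ = ∫ x, g x ∂τ := by
  rw [hτ g hg hgc, ← integral_finsetSum, ← integral_const_mul]
  · rfl
  exact fun d hd => (hg.comp (hf d hd).continuous).integrable_of_hasCompactSupport
    (hgc.comp_isClosedEmbedding (hf d hd))

lemma IsIFSInvariant.integral_ifsMarkovOp_iterate {τ : Measure X} [IsFiniteMeasure τ]
    (hτ : IsIFSInvariant D f τ) (hf : ∀ d ∈ D, IsClosedEmbedding (f d))
    {g : X → ℝ} (hg : Continuous g) (hgc : HasCompactSupport g) (m : ℕ) :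
    ∫ x, (ifsMarkovOp D f)^[m] g x ∂τ = ∫ x, g x ∂τ := by
  induction m with
  | zero => rfl
  | succ m ih =>
    obtain ⟨hc, hcs⟩ := ifsMarkovOp_iterate_continuous_hasCompactSupport hf hg hgc m
    rw [Function.iterate_succ_apply', hτ.integral_ifsMarkovOp hf hc hcs, ih]

lemma abs_integral_sub_le_of_closedBall {τ : Measure X} [IsProbabilityMeasure τ] {h : X → ℝ}
    (hh : Integrable h τ) {x₀ : X} {R ε M δ : ℝ} (hM : ∀ x, |h x| ≤ M)
    (hosc : ∀ x ∈ Metric.closedBall x₀ R, |h x - h x₀| ≤ ε)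
    (htail : τ.real (Metric.closedBall x₀ R)ᶜ ≤ δ) (hε : 0 ≤ ε) :
    |∫ x, h x ∂τ - h x₀| ≤ ε + 2 * M * δ := by
  set B := Metric.closedBall x₀ R
  have hB : MeasurableSet B := Metric.isClosed_closedBall.measurableSet
  have hint : Integrable (fun x => h x - h x₀) τ := hh.sub (integrable_const _)
  have hin : ‖∫ x in B, (h x - h x₀) ∂τ‖ ≤ ε := by
    refine (norm_setIntegral_le_of_norm_le_const (measure_lt_top _ _) hosc).trans ?_
    exact mul_le_of_le_one_right hε measureReal_le_one
  have hout : ‖∫ x in Bᶜ, (h x - h x₀) ∂τ‖ ≤ 2 * M * δ := by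
    refine (norm_setIntegral_le_of_norm_le_const (C := 2 * M) (measure_lt_top _ _)
      fun x _ => ?_).trans ?_
    · calc ‖h x - h x₀‖ ≤ |h x| + |h x₀| := abs_sub _ _
        _ ≤ 2 * M := by linarith [hM x, hM x₀]
    · exact mul_le_mul_of_nonneg_left htail (by linarith [(abs_nonneg _).trans (hM x₀)])
  calc |∫ x, h x ∂τ - h x₀|
        = |∫ x in B, (h x - h x₀) ∂τ + ∫ x in Bᶜ, (h x - h x₀) ∂τ| := by
        rw [integral_add_compl hB hint, integral_sub hh (integrable_const _), integral_const,
          probReal_univ, one_smul]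
    _ ≤ ε + 2 * M * δ := (norm_add_le _ _).trans (add_le_add hin hout)

variable [ProperSpace X]

lemma IsIFSInvariant.tendsto_ifsMarkovOp_iterate (hD : D.Nonempty) {r : ℝ≥0} (hr : r < 1)
    (hf : ∀ d ∈ D, LipschitzWith r (f d)) (hfe : ∀ d ∈ D, IsClosedEmbedding (f d))
    {τ : Measure X} [IsProbabilityMeasure τ] (hτ : IsIFSInvariant D f τ)
    {g : X → ℝ} (hg : Continuous g) (hgc : HasCompactSupport g) (x₀ : X) :
    Tendsto (fun m => (ifsMarkovOp D f)^[m] g x₀) atTop (𝓝 (∫ x, g x ∂τ)) := by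
  obtain ⟨M, hM⟩ := hgc.exists_bound_of_continuous hg
  have hM0 : 0 ≤ M := (norm_nonneg _).trans (hM x₀)
  rw [Metric.tendsto_atTop]
  intro ε hε
  set δ := ε / (2 * (1 + 2 * M))
  have hδ : 0 < δ := by positivity
  obtain ⟨η, hη, hgη⟩ := Metric.uniformContinuous_iff.1
    (hgc.uniformContinuous_of_continuous hg) δ hδ
  have hgosc : ∀ x y, dist x y ≤ η / 2 → |g x - g y| ≤ δ := fun x y hxy =>
    (hgη (hxy.trans_lt (half_lt_self hη))).le
  have htight : Tendsto (fun R : ℝ => τ (Metric.closedBall x₀ R)ᶜ) atTop (𝓝 0) := by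
    simpa using tendsto_measure_compl_closedBall_of_isTightMeasureSet
      (isTightMeasureSet_singleton_of_innerRegular (μ := τ)) x₀
  obtain ⟨R, hR⟩ := (htight.eventually (gt_mem_nhds (ENNReal.ofReal_pos.2 hδ))).exists
  have hRδ : τ.real (Metric.closedBall x₀ R)ᶜ ≤ δ :=
    ENNReal.toReal_le_of_le_ofReal hδ.le hR.le
  have hcontr : Tendsto (fun m : ℕ => (r : ℝ) ^ m * R) atTop (𝓝 0) := by
    simpa using (tendsto_pow_atTop_nhds_zero_of_lt_one r.2 hr).mul_const R
  obtain ⟨m₀, hm₀⟩ := eventually_atTop.1 (hcontr.eventually (gt_mem_nhds (half_pos hη)))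
  refine ⟨m₀, fun m hm => ?_⟩
  obtain ⟨hc, hcs⟩ := ifsMarkovOp_iterate_continuous_hasCompactSupport hfe hg hgc m
  have hosc : ∀ x ∈ Metric.closedBall x₀ R,
      |(ifsMarkovOp D f)^[m] g x - (ifsMarkovOp D f)^[m] g x₀| ≤ δ := fun x hx =>
    abs_ifsMarkovOp_iterate_sub_le hD hf hgosc m x x₀
      ((mul_le_mul_of_nonneg_left hx (by positivity)).trans (hm₀ m hm).le)
  have hest := abs_integral_sub_le_of_closedBall (hc.integrable_of_hasCompactSupport hcs)
    (abs_ifsMarkovOp_iterate_le hD hM m) hosc hRδ hδ.le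
  rw [hτ.integral_ifsMarkovOp_iterate hfe hg hgc, abs_sub_comm] at hest
  calc dist ((ifsMarkovOp D f)^[m] g x₀) (∫ x, g x ∂τ) ≤ δ + 2 * M * δ := hest
    _ = ε / 2 := by simp only [δ]; field_simp
    _ < ε := half_lt_self hε

theorem IsIFSInvariant.eq (hD : D.Nonempty) {r : ℝ≥0} (hr : r < 1)
    (hf : ∀ d ∈ D, LipschitzWith r (f d)) (hfe : ∀ d ∈ D, IsClosedEmbedding (f d))
    {τ₁ τ₂ : Measure X} [IsProbabilityMeasure τ₁] [IsProbabilityMeasure τ₂]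
    (h₁ : IsIFSInvariant D f τ₁) (h₂ : IsIFSInvariant D f τ₂) : τ₁ = τ₂ := by
  obtain ⟨x₀⟩ := nonempty_of_isProbabilityMeasure τ₁
  exact Measure.ext_of_integral_eq_on_compactlySupported fun g => tendsto_nhds_unique
    (h₁.tendsto_ifsMarkovOp_iterate hD hr hf hfe g.continuous g.hasCompactSupport x₀)
    (h₂.tendsto_ifsMarkovOp_iterate hD hr hf hfe g.continuous g.hasCompactSupport x₀)

end MarkovOperator

section SelfAffine
variable {n : ℕ} {A : Matrix (Fin n) (Fin n) ℝ}

lemma mapp_mapp (A B : Matrix (Fin n) (Fin n) ℝ) (x : Pt n) :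
    mapp A (mapp B x) = mapp (A * B) x := by
  simp [mapp, Matrix.toLpLin_apply, Matrix.mulVec_mulVec]

lemma mapp_inv_mapp (hA : A.det ≠ 0) (x : Pt n) : mapp A⁻¹ (mapp A x) = x := by
  rw [mapp_mapp, Matrix.nonsing_inv_mul A (isUnit_iff_ne_zero.2 hA)]; simp [mapp]

lemma mapp_mapp_inv (hA : A.det ≠ 0) (x : Pt n) : mapp A (mapp A⁻¹ x) = x := by
  rw [mapp_mapp, Matrix.mul_nonsing_inv A (isUnit_iff_ne_zero.2 hA)]; simp [mapp]

lemma continuous_mapp (A : Matrix (Fin n) (Fin n) ℝ) : Continuous (mapp A) :=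
  (Matrix.toEuclideanLin A).continuous_of_finiteDimensional

lemma det_ne_zero_of_norm_le_norm_mapp (hA : ∀ x : Pt n, ‖x‖ ≤ ‖mapp A x‖) :
    A.det ≠ 0 := by
  intro h
  obtain ⟨v, hv0, hv⟩ := Matrix.exists_mulVec_eq_zero_iff.2 h
  have hx : ‖WithLp.toLp 2 v‖ ≤ 0 := by
    simpa [mapp, Matrix.toLpLin_toLp, hv] using hA (WithLp.toLp 2 v)
  exact hv0 (by simpa using norm_le_zero_iff.1 hx)

lemma exists_lipschitzWith_mapp_inv (hn : 0 < n) (hA : A.det ≠ 0)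
    (hAnorm : ∀ x : Pt n, ‖x‖ ≤ ‖mapp A x‖)
    (hAeq : ∀ x : Pt n, ‖x‖ = ‖mapp A x‖ → x = 0) :
    ∃ r : ℝ≥0, r < 1 ∧ LipschitzWith r (mapp A⁻¹) := by
  have : Nonempty (Fin n) := ⟨⟨0, hn⟩⟩
  obtain ⟨x₀, hx₀, hmax⟩ := (isCompact_sphere (0 : Pt n) 1).exists_isMaxOn
    (NormedSpace.sphere_nonempty.2 zero_le_one)
    (continuous_mapp A⁻¹).norm.continuousOn
  have hx₀1 : ‖x₀‖ = 1 := by simpa using hx₀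
  have hr1 : ‖mapp A⁻¹ x₀‖ < 1 := by
    refine lt_of_le_of_ne (by simpa [mapp_mapp_inv hA, hx₀1] using hAnorm (mapp A⁻¹ x₀)) ?_
    intro h
    have h0 := hAeq _ (by rw [mapp_mapp_inv hA, hx₀1, h])
    simp [h0] at h
  refine ⟨‖mapp A⁻¹ x₀‖₊, hr1, AddMonoidHomClass.lipschitz_of_bound_nnnorm
    (Matrix.toEuclideanLin A⁻¹) _ fun z => ?_⟩
  rcases eq_or_ne z 0 with rfl | hz
  · simp
  have hz' : 0 < ‖z‖ := norm_pos_iff.2 hz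
  have hu : ‖z‖⁻¹ • z ∈ Metric.sphere (0 : Pt n) 1 := by
    simp [norm_smul, hz'.ne']
  have h : ‖mapp A⁻¹ (‖z‖⁻¹ • z)‖ ≤ ‖mapp A⁻¹ x₀‖ := hmax hu
  simp only [mapp, map_smul, norm_smul, norm_inv, norm_norm] at h
  rw [← NNReal.coe_le_coe, NNReal.coe_mul, coe_nnnorm, coe_nnnorm, coe_nnnorm]
  rwa [inv_mul_le_iff₀ hz', mul_comm] at h

def fIFSHomeomorph (hA : A.det ≠ 0) (d : Pt n) : Pt n ≃ₜ Pt n where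
  toFun := fIFS A d
  invFun y := mapp A y - d
  left_inv x := by simp [fIFS, mapp_mapp_inv hA]
  right_inv y := by simp [fIFS, mapp_inv_mapp hA]
  continuous_toFun := (continuous_mapp _).comp (continuous_add_const d)
  continuous_invFun := (continuous_mapp A).sub continuous_const

lemma fIFS_sub_fIFS (d x y : Pt n) : fIFS A d x - fIFS A d y = mapp A⁻¹ (x - y) := by
  simp [fIFS, mapp, ← map_sub]

lemma LipschitzWith.fIFS {r : ℝ≥0} (h : LipschitzWith r (mapp A⁻¹)) (d : Pt n) :
    LipschitzWith r (fIFS A d) :=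
  LipschitzWith.of_dist_le_mul fun x y => by
    simpa [dist_eq_norm, fIFS_sub_fIFS, mapp] using h.dist_le_mul (x - y) 0

lemma IsPseudoNorm.apply_fIFS_sub_fIFS {w : Pt n → ℝ} (hw : IsPseudoNorm A w)
    (hA : A.det ≠ 0) (d x y : Pt n) :
    w (fIFS A d x - fIFS A d y) = (|A.det| ^ ((1 : ℝ) / n))⁻¹ * w (x - y) := by
  have h := hw.scaling (mapp A⁻¹ (x - y))
  rw [mapp_mapp_inv hA] at h
  rw [fIFS_sub_fIFS, h, inv_mul_cancel_left₀ (Real.rpow_pos_of_pos (abs_pos.2 hA) _).ne']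

lemma IsSelfAffineSet.eq_biUnion_image_fIFS {D : Finset (Pt n)} {K : Set (Pt n)}
    (hK : IsSelfAffineSet A D K) (hA : A.det ≠ 0) : K = ⋃ d ∈ D, fIFS A d '' K := by
  have h := congrArg (mapp A⁻¹ '' ·) hK.2.2
  simp only [image_image, mapp_inv_mapp hA, image_id', image_iUnion₂] at h
  exact h

end SelfAffine

section Dimension
variable {n : ℕ} {A : Matrix (Fin n) (Fin n) ℝ} {w : Pt n → ℝ} {s : ℝ}

lemma IsPseudoNorm.exists_norm_le_of_apply_le (hw : IsPseudoNorm A w) {ε : ℝ} (hε : 0 < ε) :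
    ∃ ρ > 0, ∀ z, w z ≤ ρ → ‖z‖ ≤ ε := by
  obtain ⟨C, hC, α₁, hα₁, α₂, hα₂, hbig, hsmall⟩ := hw.comparable
  have hC' : 0 < C⁻¹ := inv_pos.2 hC
  set ε' := min ε 1
  have hε' : 0 < ε' := lt_min hε one_pos
  refine ⟨C⁻¹ * ε' ^ α₂, by positivity, fun z hz => ?_⟩
  have hz1 : ‖z‖ ≤ 1 := by
    by_contra! h
    have h1 : C⁻¹ * ε' ^ α₂ ≤ C⁻¹ :=
      mul_le_of_le_one_right hC'.le (Real.rpow_le_one hε'.le (min_le_right _ _) hα₂.le)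
    have h2 : C⁻¹ < C⁻¹ * ‖z‖ ^ α₁ :=
      lt_mul_of_one_lt_right hC' (Real.one_lt_rpow h hα₁)
    linarith [(hbig z h).1]
  have h : ‖z‖ ^ α₂ ≤ ε' ^ α₂ := le_of_mul_le_mul_left ((hsmall z hz1).1.trans hz) hC'
  exact ((Real.rpow_le_rpow_iff (norm_nonneg _) hε'.le hα₂).1 h).trans (min_le_left _ _)

lemma rpow_one_div_rpow_of_eq_mul_log_div_log {q N : ℝ} (hq : 0 < q) (hN : 0 < N)
    (hs : s = n * Real.log N / Real.log q) (hs0 : s ≠ 0) : (q ^ ((1 : ℝ) / n)) ^ s = N := by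
  have hlog : Real.log q ≠ 0 := by rintro h; simp [h] at hs; exact hs0 hs
  have hn : (n : ℝ) ≠ 0 := by rintro h; simp [h] at hs; exact hs0 hs
  rw [← Real.rpow_mul hq.le, Real.rpow_def_of_pos hq, hs,
    show Real.log q * (1 / n * (n * Real.log N / Real.log q)) = Real.log N by field_simp,
    Real.exp_log hN]

lemma IsPseudoNorm.Hw_image_fIFS (hw : IsPseudoNorm A w) (hA : A.det ≠ 0) {D : Finset (Pt n)}
    (hD : D.Nonempty) (hs : s = n * Real.log D.card / Real.log |A.det|) (hs0 : 0 < s)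
    (d : Pt n) (E : Set (Pt n)) :
    Hw w s (fIFS A d '' E) = (D.card : ℝ≥0∞)⁻¹ * Hw w s E := by
  have hQ : 0 < |A.det| ^ ((1 : ℝ) / n) := Real.rpow_pos_of_pos (abs_pos.2 hA) _
  have hN : (0 : ℝ) < D.card := by exact_mod_cast hD.card_pos
  rw [Hw_image (g := fIFS A d) hs0.le (fIFSHomeomorph hA d).bijective (inv_pos.2 hQ)
      (hw.apply_fIFS_sub_fIFS hA d),
    ENNReal.ofReal_rpow_of_pos (inv_pos.2 hQ), Real.inv_rpow hQ.le,
    rpow_one_div_rpow_of_eq_mul_log_div_log (abs_pos.2 hA) hN hs hs0.ne',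
    ENNReal.ofReal_inv_of_pos hN, ENNReal.ofReal_natCast]

lemma exists_isIFSInvariant_eq_Hw_inter_div (hw : IsPseudoNorm A w) (hA : A.det ≠ 0)
    {D : Finset (Pt n)} (hD : D.Nonempty) {K : Set (Pt n)} (hK : IsSelfAffineSet A D K)
    (hs : s = n * Real.log D.card / Real.log |A.det|)
    (hpos : 0 < Hw w s K) (hfin : Hw w s K < ⊤) :
    ∃ ν : Measure (Pt n), IsProbabilityMeasure ν ∧ IsIFSInvariant D (fIFS A) ν ∧
      ∀ E, MeasurableSet E → ν E = Hw w s (E ∩ K) / Hw w s K := by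
  have hs0 : 0 < s := by
    by_contra! h
    exact hfin.ne (Hw_eq_top_of_nonpos h K)
  have hKm : MeasurableSet K := hK.2.1.isClosed.measurableSet
  obtain ⟨μ, hμ⟩ := exists_measure_eq_Hw hs0 fun ε hε => hw.exists_norm_le_of_apply_le hε
  have hf : ∀ d ∈ D, MeasurableEmbedding (fIFS A d) := fun d _ =>
    (fIFSHomeomorph hA d).measurableEmbedding
  have hμK := restrict_eq_smul_sum_map_restrict hD (hK.eq_biUnion_image_fIFS hA) hKm
    (by rw [hμ K hKm]; exact hfin.ne) hf fun d hd E hE => by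
      rw [hμ _ ((hf d hd).measurableSet_image.2 hE), hμ E hE, hw.Hw_image_fIFS hA hD hs hs0]
  have hprob : IsProbabilityMeasure ((Hw w s K)⁻¹ • μ.restrict K) := ⟨by
    rw [Measure.smul_apply, Measure.restrict_apply_univ, hμ K hKm, smul_eq_mul,
      ENNReal.inv_mul_cancel hpos.ne' hfin.ne]⟩
  refine ⟨_, hprob, ?_, fun E hE => ?_⟩
  · refine isIFSInvariant_of_eq_smul_sum_map (fun d _ => (fIFSHomeomorph hA d).continuous) ?_
    simp only [Measure.map_smul, ← Finset.smul_sum]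
    rw [smul_comm, ← hμK]
  · rw [Measure.smul_apply, Measure.restrict_apply hE, hμ _ (hE.inter hKm), smul_eq_mul,
      ENNReal.div_eq_inv_mul]

end Dimension

theorem stmt6_general {n : ℕ} (hn : 0 < n) (A : Matrix (Fin n) (Fin n) ℝ)
    (hAnorm : ∀ x : Pt n, ‖x‖ ≤ ‖mapp A x‖)
    (hAeq : ∀ x : Pt n, ‖x‖ = ‖mapp A x‖ → x = 0)
    (w : Pt n → ℝ) (hw : IsPseudoNorm A w)
    (D : Finset (Pt n)) (hD0 : (0 : Pt n) ∈ D)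
    (K : Set (Pt n)) (hK : IsSelfAffineSet A D K)
    (s : ℝ) (hs : s = n * Real.log D.card / Real.log |A.det|)
    (hpos : 0 < Hw w s K) (hfin : Hw w s K < ⊤)
    (σ : Measure (Pt n)) (hσ : IsInvariantMeasure A D σ) :
    ∀ E : Set (Pt n), MeasurableSet E → σ E = Hw w s (E ∩ K) / Hw w s K := by
  have hA := det_ne_zero_of_norm_le_norm_mapp hAnorm
  have hD : D.Nonempty := ⟨0, hD0⟩
  obtain ⟨ν, hνprob, hν, hνE⟩ :=
    exists_isIFSInvariant_eq_Hw_inter_div hw hA hD hK hs hpos hfin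
  obtain ⟨r, hr1, hr⟩ := exists_lipschitzWith_mapp_inv hn hA hAnorm hAeq
  have := hσ.1
  have hσν : σ = ν := IsIFSInvariant.eq hD hr1 (fun d _ => hr.fIFS d)
    (fun d _ => (fIFSHomeomorph hA d).isClosedEmbedding) hσ.2 hν
  intro E hE
  rw [hσν, hνE E hE]

/-- Lemma 3.2: if `0 < ℋ^s_w(K) < ∞` then the invariant measure `σ` is the
normalized restriction of `ℋ^s_w` to `K`. -/
theorem stmt6 {n : ℕ} (hn : 0 < n) (A : Matrix (Fin n) (Fin n) ℝ)
    (hA : IsExpandingMatrix A)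
    (hAnorm : ∀ x : Pt n, ‖x‖ ≤ ‖mapp A x‖)
    (hAeq : ∀ x : Pt n, ‖x‖ = ‖mapp A x‖ → x = 0)
    (w : Pt n → ℝ) (hw : IsPseudoNorm A w)
    (D : Finset (Pt n)) (hD0 : (0 : Pt n) ∈ D)
    (K : Set (Pt n)) (hK : IsSelfAffineSet A D K)
    (s : ℝ) (hs : s = n * Real.log D.card / Real.log |A.det|)
    (hpos : 0 < Hw w s K) (hfin : Hw w s K < ⊤)
    (σ : Measure (Pt n)) (hσ : IsInvariantMeasure A D σ) :
    ∀ E : Set (Pt n), MeasurableSet E → σ E = Hw w s (E ∩ K) / Hw w s K :=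
  stmt6_general hn A hAnorm hAeq w hw D hD0 K hK s hs hpos hfin σ hσ
end
end
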